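/- Let f : [0,1]^m → ℝ be continuous with full modulus of continuity Ω_f, and let B_𝐧 denote the multivariate Bernstein operator with degrees n_1, ..., n_m ≥ 1. Then sup_{x∈[0,1]^m} |B_𝐧(f;x) − f(x)| ≤ (3/2) Ω_f(√(∑_{l=1}^m 1/n_l)). -/

import Mathlib

/-!
Since the product Bernstein weights sum to one, `B_𝐧(f;x) - f(x)` is their average of
`f(k/𝐧) - f(x)`. Cutting a segment into `⌈‖y - x‖/δ⌉` pieces of length at most `δ` gives
`|f(y) - f(x)| ≤ (1 + ‖y - x‖²/δ²) Ω_f(δ)`, and the second moment of the weights about `x` is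
`∑_l x_l(1 - x_l)/n_l ≤ δ²/4` for `δ² = ∑_l 1/n_l`. So the error is at most
`(5/4) Ω_f(δ) ≤ (3/2) Ω_f(δ)`.
-/

noncomputable def bern (n k : ℕ) (x : ℝ) : ℝ :=
  (n.choose k : ℝ) * x ^ k * (1 - x) ^ (n - k)

noncomputable def bernOpM (m : ℕ) (n : Fin m → ℕ) (f : (Fin m → ℝ) → ℝ) (x : Fin m → ℝ) : ℝ :=
  ∑ k : (∀ l : Fin m, Fin (n l + 1)),
    f (fun l => (k l : ℝ) / (n l : ℝ)) * ∏ l : Fin m, bern (n l) (k l) (x l)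

noncomputable def eudist {m : ℕ} (x y : Fin m → ℝ) : ℝ :=
  Real.sqrt (∑ l : Fin m, (x l - y l) ^ 2)

noncomputable def modContM (m : ℕ) (f : (Fin m → ℝ) → ℝ) (δ : ℝ) : ℝ :=
  sSup {r : ℝ | ∃ x ∈ Set.Icc (0 : Fin m → ℝ) 1, ∃ y ∈ Set.Icc (0 : Fin m → ℝ) 1,
    eudist x y ≤ δ ∧ r = |f x - f y|}

open Finset

lemma bern_eq_eval (n k : ℕ) (x : ℝ) : bern n k x = (bernsteinPolynomial ℝ n k).eval x := by
  simp [bern, bernsteinPolynomial, mul_assoc]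

lemma bern_nonneg (n k : ℕ) {x : ℝ} (hx : x ∈ Set.Icc (0 : ℝ) 1) : 0 ≤ bern n k x :=
  mul_nonneg (mul_nonneg (Nat.cast_nonneg _) (pow_nonneg hx.1 _)) (pow_nonneg (sub_nonneg.2 hx.2) _)

lemma sum_bern (n : ℕ) (x : ℝ) : ∑ k : Fin (n + 1), bern n k x = 1 := by
  rw [Fin.sum_univ_eq_sum_range (fun k => bern n k x)]
  simp only [bern_eq_eval, ← Polynomial.eval_finsetSum, bernsteinPolynomial.sum,
    Polynomial.eval_one]

lemma sum_sq_sub_div_mul_bern {n : ℕ} (hn : n ≠ 0) (x : ℝ) :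
    ∑ k : Fin (n + 1), (x - (k : ℝ) / n) ^ 2 * bern n k x = x * (1 - x) / n := by
  have hvar := congrArg (Polynomial.eval x) (bernsteinPolynomial.variance (R := ℝ) n)
  simp only [Polynomial.eval_finsetSum, Polynomial.eval_mul, Polynomial.eval_pow,
    Polynomial.eval_sub, Polynomial.eval_natCast, Polynomial.eval_X,
    Polynomial.eval_one, nsmul_eq_mul, ← bern_eq_eval] at hvar
  rw [Fin.sum_univ_eq_sum_range (fun k => (x - (k : ℝ) / n) ^ 2 * bern n k x)]
  have hn' : (n : ℝ) ≠ 0 := Nat.cast_ne_zero.2 hn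
  have hterm : ∀ k : ℕ, (x - (k : ℝ) / n) ^ 2 * bern n k x
      = (n * x - k) ^ 2 * bern n k x / n ^ 2 := fun k => by field_simp
  simp only [hterm, ← sum_div, hvar]
  field_simp

lemma sum_apply_mul_prod_of_sum_eq_one {ι : Type*} [Fintype ι] [DecidableEq ι] {κ : ι → Type*}
    [∀ l, Fintype (κ l)] (w : ∀ l, κ l → ℝ) (hw : ∀ l, ∑ j, w l j = 1)
    (φ : ∀ l, κ l → ℝ) (l₀ : ι) :
    ∑ k : (∀ l, κ l), φ l₀ (k l₀) * ∏ l, w l (k l) = ∑ j, φ l₀ j * w l₀ j := by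
  have hfactor : ∀ k : (∀ l, κ l), φ l₀ (k l₀) * ∏ l, w l (k l)
      = ∏ l, (if l = l₀ then φ l (k l) else 1) * w l (k l) := fun k => by
    rw [prod_mul_distrib, prod_ite_eq' univ l₀ (fun l => φ l (k l)), if_pos (mem_univ _)]
  rw [sum_congr rfl fun k _ => hfactor k,
    ← Fintype.prod_sum (fun l j => (if l = l₀ then φ l j else 1) * w l j),
    prod_eq_single l₀ (fun l _ hl => by simp only [if_neg hl, one_mul, hw]) (by simp)]
  simp

section TensorWeights

variable {ι : Type*} (n : ι → ℕ)

noncomputable def bernNode (k : ∀ l, Fin (n l + 1)) : ι → ℝ :=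
  fun l => (k l : ℝ) / (n l : ℝ)

noncomputable def bernWeight [Fintype ι] (x : ι → ℝ) (k : ∀ l, Fin (n l + 1)) : ℝ :=
  ∏ l, bern (n l) (k l) (x l)

lemma bernNode_mem_Icc (k : ∀ l, Fin (n l + 1)) : bernNode n k ∈ Set.Icc 0 1 := by
  refine ⟨fun l => by simp only [bernNode]; positivity, fun l => div_le_one_of_le₀ ?_ ?_⟩
  · exact Nat.cast_le.2 (Nat.lt_succ_iff.1 (k l).2)
  · positivity

variable [Fintype ι]

lemma bernWeight_nonneg {x : ι → ℝ} (hx : x ∈ Set.Icc 0 1) (k : ∀ l, Fin (n l + 1)) :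
    0 ≤ bernWeight n x k :=
  prod_nonneg fun l _ => bern_nonneg _ _ ⟨hx.1 l, hx.2 l⟩

variable [DecidableEq ι]

lemma sum_bernWeight (x : ι → ℝ) : ∑ k, bernWeight n x k = 1 := by
  unfold bernWeight
  rw [← Fintype.prod_sum (fun l (j : Fin (n l + 1)) => bern (n l) j (x l))]
  simp only [sum_bern, prod_const_one]

lemma sum_sq_sub_bernNode_mul_bernWeight {l : ι} (hn : n l ≠ 0) (x : ι → ℝ) :
    ∑ k, (x l - bernNode n k l) ^ 2 * bernWeight n x k = x l * (1 - x l) / n l := by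
  rw [← sum_sq_sub_div_mul_bern hn]
  exact sum_apply_mul_prod_of_sum_eq_one (fun l (j : Fin (n l + 1)) => bern (n l) j (x l))
    (fun l => sum_bern _ _) (fun l (j : Fin (n l + 1)) => (x l - (j : ℝ) / n l) ^ 2) l

end TensorWeights

lemma bernOpM_eq_sum (m : ℕ) (n : Fin m → ℕ) (f : (Fin m → ℝ) → ℝ) (x : Fin m → ℝ) :
    bernOpM m n f x = ∑ k, f (bernNode n k) * bernWeight n x k := rfl

lemma natCeil_le_one_add_sq {a : ℝ} (ha : 0 ≤ a) : (⌈a⌉₊ : ℝ) ≤ 1 + a ^ 2 := by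
  rcases le_or_gt a 1 with ha1 | ha1
  · have : (⌈a⌉₊ : ℝ) ≤ 1 := by exact_mod_cast Nat.ceil_le.2 (by simpa using ha1)
    nlinarith
  · nlinarith [Nat.ceil_lt_add_one ha]

section ModulusOfContinuity

variable {m : ℕ}

lemma eudist_eq_dist (x y : Fin m → ℝ) :
    eudist x y = dist (WithLp.toLp 2 x) (WithLp.toLp 2 y) := by
  simp [eudist, EuclideanSpace.dist_eq, Real.dist_eq, sq_abs]

lemma eudist_self (x : Fin m → ℝ) : eudist x x = 0 := by
  simp [eudist_eq_dist]

lemma eq_of_eudist_le_zero {x y : Fin m → ℝ} (h : eudist x y ≤ 0) : x = y := by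
  rw [eudist_eq_dist, dist_le_zero] at h
  exact WithLp.toLp_injective 2 h

lemma eudist_lineMap_lineMap (x y : Fin m → ℝ) (s t : ℝ) :
    eudist (AffineMap.lineMap x y s) (AffineMap.lineMap x y t) = |s - t| * eudist x y := by
  have hcomm : ∀ c : ℝ, WithLp.toLp 2 (AffineMap.lineMap x y c)
      = AffineMap.lineMap (WithLp.toLp 2 x) (WithLp.toLp 2 y) c := fun c => by
    simp [AffineMap.lineMap_apply_module]
  rw [eudist_eq_dist, eudist_eq_dist, hcomm, hcomm, dist_lineMap_lineMap, Real.dist_eq]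

variable {f : (Fin m → ℝ) → ℝ} (hf : ContinuousOn f (Set.Icc 0 1))
include hf

lemma bddAbove_modContM_set (δ : ℝ) :
    BddAbove {r : ℝ | ∃ x ∈ Set.Icc (0 : Fin m → ℝ) 1, ∃ y ∈ Set.Icc (0 : Fin m → ℝ) 1,
      eudist x y ≤ δ ∧ r = |f x - f y|} := by
  obtain ⟨M, hM⟩ := isCompact_Icc.exists_bound_of_continuousOn hf
  refine ⟨M + M, fun r ⟨x, hx, y, hy, _, hr⟩ => hr ▸ ?_⟩
  exact (abs_sub _ _).trans (add_le_add (hM x hx) (hM y hy))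

lemma abs_sub_le_modContM {δ : ℝ} {x y : Fin m → ℝ} (hx : x ∈ Set.Icc 0 1)
    (hy : y ∈ Set.Icc 0 1) (hd : eudist x y ≤ δ) :
    |f x - f y| ≤ modContM m f δ :=
  le_csSup (bddAbove_modContM_set hf δ) ⟨x, hx, y, hy, hd, rfl⟩

lemma modContM_nonneg {δ : ℝ} (hδ : 0 ≤ δ) : 0 ≤ modContM m f δ := by
  have h0 : (0 : Fin m → ℝ) ∈ Set.Icc 0 1 := ⟨le_rfl, zero_le_one⟩
  simpa using abs_sub_le_modContM hf h0 h0 ((eudist_self 0).trans_le hδ)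

lemma abs_sub_le_natCast_mul_modContM {δ : ℝ} (N : ℕ) {x y : Fin m → ℝ}
    (hx : x ∈ Set.Icc 0 1) (hy : y ∈ Set.Icc 0 1) (hd : eudist x y ≤ N * δ) :
    |f x - f y| ≤ N * modContM m f δ := by
  rcases N.eq_zero_or_pos with rfl | hN
  · rw [eq_of_eudist_le_zero (x := x) (y := y) (by simpa using hd)]
    simp
  have hN' : (0 : ℝ) < N := Nat.cast_pos.2 hN
  set z : ℕ → Fin m → ℝ := fun i => AffineMap.lineMap x y ((i : ℝ) / N)
  have hz_mem : ∀ i ≤ N, z i ∈ Set.Icc 0 1 := fun i hi =>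
    (convex_Icc 0 1).lineMap_mem hx hy
      ⟨by positivity, div_le_one_of_le₀ (Nat.cast_le.2 hi) hN'.le⟩
  have hz_step : ∀ i, eudist (z i) (z (i + 1)) ≤ δ := fun i => by
    rw [eudist_lineMap_lineMap, Nat.cast_succ, ← sub_div, sub_add_cancel_left, abs_div,
      abs_neg, abs_one, abs_of_pos hN', div_mul_eq_mul_div, one_mul, div_le_iff₀ hN']
    linarith
  calc |f x - f y| = |∑ i ∈ range N, (f (z i) - f (z (i + 1)))| := by
        rw [sum_range_sub' (fun i => f (z i))]
        simp [z, hN'.ne']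
    _ ≤ ∑ i ∈ range N, |f (z i) - f (z (i + 1))| := abs_sum_le_sum_abs _ _
    _ ≤ ∑ _i ∈ range N, modContM m f δ := sum_le_sum fun i hi =>
        abs_sub_le_modContM hf (hz_mem i (mem_range.1 hi).le) (hz_mem (i + 1) (mem_range.1 hi))
          (hz_step i)
    _ = N * modContM m f δ := by rw [sum_const, card_range, nsmul_eq_mul]

lemma abs_sub_le_one_add_sq_div_mul_modContM {δ : ℝ} (hδ : 0 < δ) {x y : Fin m → ℝ}
    (hx : x ∈ Set.Icc 0 1) (hy : y ∈ Set.Icc 0 1) :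
    |f x - f y| ≤ (1 + eudist x y ^ 2 / δ ^ 2) * modContM m f δ := by
  set a := eudist x y / δ
  have hd : eudist x y ≤ ⌈a⌉₊ * δ := (div_le_iff₀ hδ).1 (Nat.le_ceil a)
  calc |f x - f y| ≤ ⌈a⌉₊ * modContM m f δ := abs_sub_le_natCast_mul_modContM hf _ hx hy hd
    _ ≤ (1 + a ^ 2) * modContM m f δ :=
        mul_le_mul_of_nonneg_right
          (natCeil_le_one_add_sq (div_nonneg (Real.sqrt_nonneg _) hδ.le))
          (modContM_nonneg hf hδ.le)
    _ = (1 + eudist x y ^ 2 / δ ^ 2) * modContM m f δ := by rw [div_pow]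

end ModulusOfContinuity

lemma eudist_sq {m : ℕ} (x y : Fin m → ℝ) : eudist x y ^ 2 = ∑ l, (x l - y l) ^ 2 :=
  Real.sq_sqrt (sum_nonneg fun _ _ => sq_nonneg _)

lemma sum_mul_one_sub_div_le {ι : Type*} [Fintype ι] (x : ι → ℝ) (n : ι → ℕ) :
    ∑ l, x l * (1 - x l) / n l ≤ (∑ l, 1 / (n l : ℝ)) / 4 := by
  rw [sum_div]
  refine sum_le_sum fun l _ => ?_
  rw [div_right_comm]
  exact div_le_div_of_nonneg_right (by nlinarith [sq_nonneg (x l - 1 / 2)]) (Nat.cast_nonneg _)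

section BernsteinOperator

variable {m : ℕ} {n : Fin m → ℕ}

lemma sum_eudist_sq_mul_bernWeight (hn : ∀ l, n l ≠ 0) (x : Fin m → ℝ) :
    ∑ k, eudist (bernNode n k) x ^ 2 * bernWeight n x k = ∑ l, x l * (1 - x l) / n l := by
  simp_rw [eudist_sq, sum_mul, sub_sq_comm _ (x _)]
  rw [sum_comm]
  exact sum_congr rfl fun l _ => sum_sq_sub_bernNode_mul_bernWeight n (hn l) x

lemma bernOpM_of_isEmpty [IsEmpty (Fin m)] (f : (Fin m → ℝ) → ℝ) (x : Fin m → ℝ) :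
    bernOpM m n f x = f x := by
  simp [bernOpM_eq_sum, bernWeight, Subsingleton.elim _ x]

lemma abs_bernOpM_sub_le (hn : ∀ l, n l ≠ 0) {f : (Fin m → ℝ) → ℝ}
    (hf : ContinuousOn f (Set.Icc 0 1)) {x : Fin m → ℝ} (hx : x ∈ Set.Icc 0 1) {δ : ℝ}
    (hδ : 0 < δ) :
    |bernOpM m n f x - f x| ≤ (1 + (∑ l, x l * (1 - x l) / n l) / δ ^ 2) * modContM m f δ := by
  set W := bernWeight n x
  set Ω := modContM m f δ
  set d : (∀ l, Fin (n l + 1)) → ℝ := fun k => eudist (bernNode n k) x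
  calc |bernOpM m n f x - f x| = |∑ k, (f (bernNode n k) - f x) * W k| := by
        simp only [bernOpM_eq_sum, sub_mul, sum_sub_distrib, ← mul_sum, W, sum_bernWeight,
          mul_one]
    _ ≤ ∑ k, |f (bernNode n k) - f x| * W k := by
        refine (abs_sum_le_sum_abs _ _).trans_eq (sum_congr rfl fun k _ => ?_)
        rw [abs_mul, abs_of_nonneg (bernWeight_nonneg n hx k)]
    _ ≤ ∑ k, (1 + d k ^ 2 / δ ^ 2) * Ω * W k := sum_le_sum fun k _ =>
        mul_le_mul_of_nonneg_right
          (abs_sub_le_one_add_sq_div_mul_modContM hf hδ (bernNode_mem_Icc n k) hx)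
          (bernWeight_nonneg n hx k)
    _ = (1 + (∑ k, d k ^ 2 * W k) / δ ^ 2) * Ω := by
        have hsplit : ∀ k,
            (1 + d k ^ 2 / δ ^ 2) * Ω * W k = Ω * W k + Ω / δ ^ 2 * (d k ^ 2 * W k) :=
          fun k => by ring
        rw [sum_congr rfl fun k _ => hsplit k, sum_add_distrib, ← mul_sum, ← mul_sum,
          sum_bernWeight]
        ring
    _ = (1 + (∑ l, x l * (1 - x l) / n l) / δ ^ 2) * Ω := by
        rw [sum_eudist_sq_mul_bernWeight hn x]

end BernsteinOperator

theorem stmt14 (m : ℕ) (n : Fin m → ℕ) (hn : ∀ l, 1 ≤ n l)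
    (f : (Fin m → ℝ) → ℝ)
    (hf : ContinuousOn f (Set.Icc (0 : Fin m → ℝ) 1)) :
    (⨆ x : Set.Icc (0 : Fin m → ℝ) 1, |bernOpM m n f x - f x|)
      ≤ (3 / 2) * modContM m f (Real.sqrt (∑ l : Fin m, 1 / (n l : ℝ))) := by
  set δ := Real.sqrt (∑ l : Fin m, 1 / (n l : ℝ))
  have hΩ : 0 ≤ modContM m f δ := modContM_nonneg hf (Real.sqrt_nonneg _)
  have : Nonempty (Set.Icc (0 : Fin m → ℝ) 1) := ⟨⟨0, le_rfl, zero_le_one⟩⟩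
  refine ciSup_le fun ⟨x, hx⟩ => ?_
  rcases isEmpty_or_nonempty (Fin m) with hm | hm
  · rw [bernOpM_of_isEmpty, sub_self, abs_zero]
    positivity
  have hn_pos : ∀ l, (0 : ℝ) < n l := fun l => Nat.cast_pos.2 (hn l)
  have hδ_sq : δ ^ 2 = ∑ l : Fin m, 1 / (n l : ℝ) := Real.sq_sqrt (by positivity)
  have hδ : 0 < δ :=
    Real.sqrt_pos.2 (sum_pos (fun l _ => one_div_pos.2 (hn_pos l)) univ_nonempty)
  calc |bernOpM m n f x - f x| ≤ (1 + (∑ l, x l * (1 - x l) / n l) / δ ^ 2) * modContM m f δ :=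
        abs_bernOpM_sub_le (fun l => Nat.one_le_iff_ne_zero.1 (hn l)) hf hx hδ
    _ ≤ (1 + (δ ^ 2 / 4) / δ ^ 2) * modContM m f δ := by
        gcongr
        exact hδ_sq ▸ sum_mul_one_sub_div_le x n
    _ = 5 / 4 * modContM m f δ := by field_simp; ring
    _ ≤ 3 / 2 * modContM m f δ := mul_le_mul_of_nonneg_right (by norm_num) hΩ
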